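/- (Theorem 4.3, main theorem, for mixtures of Plackett–Luce preferences.) Let Y be a finite nonempty set, let w_1, …, w_n : Y → ℝ_{>0} be positive weight functions, and let D be a probability distribution over {1, …, n}. Then for every k ≥ 1 there exists a probability distribution p_k on Y such that for every response y ∈ Y, E_{i~D} E_{S~p_k^{⊗k}}[ w_i(S) / (w_i(S) + w_i(y)) ] ≥ k/(k+1). -/

import Mathlib

open Finset

section Aux

open MeasureTheory Set Real

variable {Y : Type} [Fintype Y] [DecidableEq Y]

/-- The PL "loss": probability that `z` beats a `k`-sample from `p`, for a single
weight function `w`. -/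
noncomputable def plLoss (k : ℕ) (w : Y → ℝ) (p : Y → ℝ) (z : Y) : ℝ :=
  ∑ v : Fin k → Y, (∏ j, p (v j)) * (w z / ((∑ j, w (v j)) + w z))

lemma exp_int {lam : ℝ} (h : 0 < lam) :
    (∫ t in Ioi (0 : ℝ), exp (-(lam * t))) = 1 / lam := by
  have h1 := integral_comp_mul_left_Ioi (fun x => exp (-x)) 0 h
  simp only [mul_zero, integral_exp_neg_Ioi_zero, smul_eq_mul, mul_one] at h1
  rw [h1, one_div]

lemma exp_int_integrable {lam : ℝ} (h : 0 < lam) :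
    IntegrableOn (fun t : ℝ => exp (-(lam * t))) (Ioi (0 : ℝ)) := by
  have := exp_neg_integrableOn_Ioi (0 : ℝ) h
  simpa [neg_mul] using this

lemma weight_pos (k : ℕ) {w : Y → ℝ} (hw : ∀ y, 0 < w y) (z : Y) (v : Fin k → Y) :
    0 < (∑ j, w (v j)) + w z :=
  add_pos_of_nonneg_of_pos (Finset.sum_nonneg fun j _ => (hw (v j)).le) (hw z)

/-- Pointwise expansion of the integrand. -/
lemma expand_key (k : ℕ) (w : Y → ℝ) (r : Y → ℝ) (z : Y) (t : ℝ) :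
    (w z * exp (-(w z * t))) * (∑ y, r y * exp (-(w y * t))) ^ k
      = ∑ v : Fin k → Y, (∏ j, r (v j)) * (w z * exp (-(((∑ j, w (v j)) + w z) * t))) := by
  rw [Fintype.sum_pow, Finset.mul_sum]
  refine Finset.sum_congr rfl fun v _ => ?_
  rw [Finset.prod_mul_distrib, ← Real.exp_sum]
  have hsum : (∑ j, -(w (v j) * t)) = -((∑ j, w (v j)) * t) := by
    rw [Finset.sum_neg_distrib, ← Finset.sum_mul]
  rw [hsum]
  have harg : -(w z * t) + -((∑ j, w (v j)) * t) = -(((∑ j, w (v j)) + w z) * t) := by ring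
  calc w z * exp (-(w z * t)) * ((∏ j, r (v j)) * exp (-((∑ j, w (v j)) * t)))
      = (∏ j, r (v j)) * (w z * (exp (-(w z * t)) * exp (-((∑ j, w (v j)) * t)))) := by ring
    _ = (∏ j, r (v j)) * (w z * exp (-(((∑ j, w (v j)) + w z) * t))) := by
        rw [← Real.exp_add, harg]

lemma integrable_key (k : ℕ) {w : Y → ℝ} (hw : ∀ y, 0 < w y) (r : Y → ℝ) (z : Y) :
    IntegrableOn
      (fun t : ℝ => (w z * exp (-(w z * t))) * (∑ y, r y * exp (-(w y * t))) ^ k)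
      (Ioi (0 : ℝ)) := by
  have hfun : (fun t : ℝ => (w z * exp (-(w z * t))) * (∑ y, r y * exp (-(w y * t))) ^ k)
      = fun t => ∑ v : Fin k → Y,
          (∏ j, r (v j)) * (w z * exp (-(((∑ j, w (v j)) + w z) * t))) :=
    funext (expand_key k w r z)
  rw [hfun]
  refine integrable_finset_sum _ fun v _ => ?_
  exact ((exp_int_integrable (weight_pos k hw z v)).const_mul (w z)).const_mul _

/-- Integral representation of the PL loss. -/
lemma plLoss_rep (k : ℕ) {w : Y → ℝ} (hw : ∀ y, 0 < w y) (p : Y → ℝ) (z : Y) :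
    plLoss k w p z
      = ∫ t in Ioi (0 : ℝ), (w z * exp (-(w z * t))) * (∑ y, p y * exp (-(w y * t))) ^ k := by
  have hfun : (fun t : ℝ => (w z * exp (-(w z * t))) * (∑ y, p y * exp (-(w y * t))) ^ k)
      = fun t => ∑ v : Fin k → Y,
          (∏ j, p (v j)) * (w z * exp (-(((∑ j, w (v j)) + w z) * t))) :=
    funext (expand_key k w p z)
  rw [hfun, integral_finset_sum _ (fun v _ =>
    ((exp_int_integrable (weight_pos k hw z v)).const_mul (w z)).const_mul _)]
  refine Finset.sum_congr rfl fun v _ => ?_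
  rw [integral_const_mul, integral_const_mul, exp_int (weight_pos k hw z v), mul_one_div]

/-- Convexity inequality for the PL loss. -/
lemma plLoss_convex_ineq (k : ℕ) {w : Y → ℝ} (hw : ∀ y, 0 < w y)
    {p q : Y → ℝ} (hp : ∀ y, 0 ≤ p y) (hq : ∀ y, 0 ≤ q y)
    {a b : ℝ} (ha : 0 ≤ a) (hb : 0 ≤ b) (hab : a + b = 1) (z : Y) :
    plLoss k w (fun y => a * p y + b * q y) z
      ≤ a * plLoss k w p z + b * plLoss k w q z := by
  rw [plLoss_rep k hw _ z, plLoss_rep k hw p z, plLoss_rep k hw q z]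
  have hptwise : ∀ t : ℝ,
      (w z * exp (-(w z * t))) * (∑ y, (a * p y + b * q y) * exp (-(w y * t))) ^ k
        ≤ a * ((w z * exp (-(w z * t))) * (∑ y, p y * exp (-(w y * t))) ^ k)
          + b * ((w z * exp (-(w z * t))) * (∑ y, q y * exp (-(w y * t))) ^ k) := by
    intro t
    set A := w z * exp (-(w z * t)) with hA
    set P := ∑ y, p y * exp (-(w y * t)) with hP
    set Q := ∑ y, q y * exp (-(w y * t)) with hQ
    have hA0 : 0 ≤ A := mul_nonneg (hw z).le (exp_pos _).le
    have hP0 : 0 ≤ P := Finset.sum_nonneg fun y _ => mul_nonneg (hp y) (exp_pos _).le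
    have hQ0 : 0 ≤ Q := Finset.sum_nonneg fun y _ => mul_nonneg (hq y) (exp_pos _).le
    have hmix : (∑ y, (a * p y + b * q y) * exp (-(w y * t))) = a * P + b * Q := by
      rw [hP, hQ, Finset.mul_sum, Finset.mul_sum, ← Finset.sum_add_distrib]
      refine Finset.sum_congr rfl fun y _ => by ring
    rw [hmix]
    have hpow : (a * P + b * Q) ^ k ≤ a * P ^ k + b * Q ^ k := by
      have := (convexOn_pow (𝕜 := ℝ) k).2 (Set.mem_Ici.mpr hP0) (Set.mem_Ici.mpr hQ0)
        ha hb hab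
      simpa [smul_eq_mul] using this
    calc A * (a * P + b * Q) ^ k ≤ A * (a * P ^ k + b * Q ^ k) :=
          mul_le_mul_of_nonneg_left hpow hA0
      _ = a * (A * P ^ k) + b * (A * Q ^ k) := by ring
  have h1 := integrable_key k hw p z
  have h2 := integrable_key k hw q z
  have hmixint := integrable_key k hw (fun y => a * p y + b * q y) z
  calc (∫ t in Ioi (0 : ℝ),
        (w z * exp (-(w z * t))) * (∑ y, (a * p y + b * q y) * exp (-(w y * t))) ^ k)
      ≤ ∫ t in Ioi (0 : ℝ),
          (a * ((w z * exp (-(w z * t))) * (∑ y, p y * exp (-(w y * t))) ^ k)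
          + b * ((w z * exp (-(w z * t))) * (∑ y, q y * exp (-(w y * t))) ^ k)) := by
        refine integral_mono hmixint ((h1.const_mul a).add (h2.const_mul b)) ?_
        intro t; exact hptwise t
    _ = a * (∫ t in Ioi (0 : ℝ),
            (w z * exp (-(w z * t))) * (∑ y, p y * exp (-(w y * t))) ^ k)
        + b * (∫ t in Ioi (0 : ℝ),
            (w z * exp (-(w z * t))) * (∑ y, q y * exp (-(w y * t))) ^ k) := by
        rw [integral_add (h1.const_mul a) (h2.const_mul b), integral_const_mul,
          integral_const_mul]

/-- The symmetrization identity: on average over `z ~ p`, the loss is exactly `1/(k+1)`. -/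
lemma plLoss_identity (k : ℕ) {w : Y → ℝ} (hw : ∀ y, 0 < w y)
    {p : Y → ℝ} (hp1 : ∑ y, p y = 1) :
    ∑ z, p z * plLoss k w p z = 1 / ((k : ℝ) + 1) := by
  set T : Fin (k + 1) → ℝ := fun m =>
    ∑ u : Fin (k + 1) → Y, (∏ j, p (u j)) * (w (u m) / ∑ j, w (u j)) with hT
  have hW : ∀ u : Fin (k + 1) → Y, 0 < ∑ j, w (u j) := fun u =>
    Finset.sum_pos (fun j _ => hw _) Finset.univ_nonempty
  -- step 1 : the LHS is `T 0`
  have h0 : T 0 = ∑ z, p z * plLoss k w p z := by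
    simp only [hT]
    rw [← Equiv.sum_comp (Fin.consEquiv fun _ : Fin (k + 1) => Y)
      (fun u : Fin (k + 1) → Y => (∏ j, p (u j)) * (w (u 0) / ∑ j, w (u j)))]
    rw [Fintype.sum_prod_type]
    refine Finset.sum_congr rfl fun z _ => ?_
    unfold plLoss
    rw [Finset.mul_sum]
    refine Finset.sum_congr rfl fun v _ => ?_
    simp only [Fin.consEquiv_apply]
    rw [Fin.prod_univ_succ, Fin.sum_univ_succ]
    simp only [Fin.cons_zero, Fin.cons_succ]
    rw [add_comm (w z) (∑ j : Fin k, w (v j))]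
    ring
  -- step 2 : all the `T m` agree
  have hperm : ∀ m, T m = T 0 := by
    intro m
    simp only [hT]
    refine Fintype.sum_equiv
      (Equiv.arrowCongr (Equiv.swap (0 : Fin (k + 1)) m) (Equiv.refl Y)) _ _ ?_
    intro u
    have happ : ∀ j, (Equiv.arrowCongr (Equiv.swap (0 : Fin (k + 1)) m) (Equiv.refl Y)) u j
        = u (Equiv.swap (0 : Fin (k + 1)) m j) := by
      intro j
      simp [Equiv.arrowCongr_apply, Equiv.symm_swap]
    have hprod : (∏ j, p ((Equiv.arrowCongr (Equiv.swap (0 : Fin (k + 1)) m)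
        (Equiv.refl Y)) u j)) = ∏ j, p (u j) := by
      rw [Finset.prod_congr rfl fun j _ => by rw [happ j]]
      exact Equiv.prod_comp (Equiv.swap (0 : Fin (k + 1)) m) fun j => p (u j)
    have hsum : (∑ j, w ((Equiv.arrowCongr (Equiv.swap (0 : Fin (k + 1)) m)
        (Equiv.refl Y)) u j)) = ∑ j, w (u j) := by
      rw [Finset.sum_congr rfl fun j _ => by rw [happ j]]
      exact Equiv.sum_comp (Equiv.swap (0 : Fin (k + 1)) m) fun j => w (u j)
    rw [hprod, hsum, happ 0, Equiv.swap_apply_left]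
  -- step 3 : the `T m` sum to 1
  have hsumT : ∑ m : Fin (k + 1), T m = 1 := by
    simp only [hT]
    rw [Finset.sum_comm]
    have hrow : ∀ u : Fin (k + 1) → Y,
        (∑ m : Fin (k + 1), (∏ j, p (u j)) * (w (u m) / ∑ j, w (u j))) = ∏ j, p (u j) := by
      intro u
      rw [← Finset.mul_sum, ← Finset.sum_div, div_self (hW u).ne', mul_one]
    rw [Finset.sum_congr rfl fun u _ => hrow u, ← Fintype.sum_pow p (k + 1), hp1, one_pow]
  have hcard : ∑ m : Fin (k + 1), T m = ((k : ℝ) + 1) * T 0 := by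
    rw [Finset.sum_congr rfl fun m _ => hperm m, Finset.sum_const, Finset.card_univ,
      Fintype.card_fin, nsmul_eq_mul]
    push_cast
    ring
  have hk1 : ((k : ℝ) + 1) ≠ 0 := by positivity
  rw [← h0]
  rw [hcard] at hsumT
  field_simp
  linarith [hsumT]

end Aux

section Main

open MeasureTheory Set Real

variable {Y : Type} [Fintype Y] [DecidableEq Y] [Nonempty Y]

/-- The mixture loss. -/
noncomputable def mixLoss (n k : ℕ) (w : Fin n → Y → ℝ) (D : Fin n → ℝ)
    (p : Y → ℝ) (z : Y) : ℝ :=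
  ∑ i, D i * plLoss k (w i) p z

lemma mixLoss_continuous (n k : ℕ) (w : Fin n → Y → ℝ) (D : Fin n → ℝ) (z : Y) :
    Continuous fun p : Y → ℝ => mixLoss n k w D p z := by
  unfold mixLoss plLoss
  refine continuous_finset_sum _ fun i _ => continuous_const.mul ?_
  refine continuous_finset_sum _ fun v _ => Continuous.mul ?_ continuous_const
  exact continuous_finset_prod _ fun j _ => continuous_apply (v j)

/-- Key step : for each `c > 1/(k+1)` there is `p` in the simplex whose mixture loss
is everywhere `< c`.  Proved by hyperplane separation. -/
lemma exists_small_loss (n k : ℕ) (w : Fin n → Y → ℝ) (hw : ∀ i y, 0 < w i y)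
    (D : Fin n → ℝ) (hD0 : ∀ i, 0 ≤ D i) (hD1 : ∑ i, D i = 1)
    {c : ℝ} (hc : 1 / ((k : ℝ) + 1) < c) :
    ∃ p ∈ stdSimplex ℝ Y, ∀ z, mixLoss n k w D p z < c := by
  by_contra hcon
  push_neg at hcon
  -- the open convex set `B` and the convex set `C`
  set B : Set (Y → ℝ) := Set.univ.pi fun _ : Y => Iio c with hBdef
  set C : Set (Y → ℝ) := {x | ∃ p ∈ stdSimplex ℝ Y, ∀ z, mixLoss n k w D p z ≤ x z} with hCdef
  have hBopen : IsOpen B := isOpen_set_pi Set.finite_univ fun _ _ => isOpen_Iio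
  have hBconv : Convex ℝ B := convex_pi fun _ _ => convex_Iio c
  have hBmem : ∀ x : Y → ℝ, (∀ z, x z < c) → x ∈ B := by
    intro x hx
    rw [hBdef, Set.mem_pi]
    exact fun z _ => hx z
  have hCconv : Convex ℝ C := by
    rintro x1 ⟨p1, hp1, hL1⟩ x2 ⟨p2, hp2, hL2⟩ a b ha hb hab
    refine ⟨fun y => a * p1 y + b * p2 y, ?_, ?_⟩
    · have h := convex_stdSimplex ℝ Y hp1 hp2 ha hb hab
      have heq : a • p1 + b • p2 = fun y => a * p1 y + b * p2 y := by
        funext y; simp [smul_eq_mul]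
      rwa [heq] at h
    · intro z
      have hmix : mixLoss n k w D (fun y => a * p1 y + b * p2 y) z
          ≤ a * mixLoss n k w D p1 z + b * mixLoss n k w D p2 z := by
        unfold mixLoss
        rw [Finset.mul_sum, Finset.mul_sum, ← Finset.sum_add_distrib]
        refine Finset.sum_le_sum fun i _ => ?_
        have := plLoss_convex_ineq k (hw i) hp1.1 hp2.1 ha hb hab z
        calc D i * plLoss k (w i) (fun y => a * p1 y + b * p2 y) z
            ≤ D i * (a * plLoss k (w i) p1 z + b * plLoss k (w i) p2 z) :=
              mul_le_mul_of_nonneg_left this (hD0 i)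
          _ = a * (D i * plLoss k (w i) p1 z) + b * (D i * plLoss k (w i) p2 z) := by ring
      have hx : a * x1 z + b * x2 z = (a • x1 + b • x2) z := by
        simp [smul_eq_mul]
      calc mixLoss n k w D (fun y => a * p1 y + b * p2 y) z
          ≤ a * mixLoss n k w D p1 z + b * mixLoss n k w D p2 z := hmix
        _ ≤ a * x1 z + b * x2 z :=
            add_le_add (mul_le_mul_of_nonneg_left (hL1 z) ha)
              (mul_le_mul_of_nonneg_left (hL2 z) hb)
        _ = (a • x1 + b • x2) z := hx
  have hBlt : ∀ x ∈ B, ∀ z, x z < c := by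
    intro x hx z
    rw [hBdef, Set.mem_pi] at hx
    exact hx z (Set.mem_univ z)
  have hdisj : Disjoint B C := by
    rw [Set.disjoint_left]
    rintro x hxB ⟨p, hp, hL⟩
    obtain ⟨z, hz⟩ := hcon p hp
    exact absurd (lt_of_le_of_lt (hL z) (hBlt x hxB z)) (not_lt.2 hz)
  obtain ⟨f, u, hfB, hfC⟩ := geometric_hahn_banach_open hBconv hBopen hCconv hdisj
  set lam : Y → ℝ := fun z => f (fun j => if z = j then (1 : ℝ) else 0) with hlam
  have hf : ∀ x : Y → ℝ, f x = ∑ z, x z * lam z := by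
    intro x
    conv_lhs => rw [pi_eq_sum_univ x]
    rw [map_sum]
    refine Finset.sum_congr rfl fun z _ => ?_
    rw [f.map_smul, smul_eq_mul]
  -- the uniform distribution, showing `C` is nonempty
  have hcardpos : (0 : ℝ) < (Fintype.card Y : ℝ) := by
    have := Fintype.card_pos (α := Y)
    positivity
  set p0 : Y → ℝ := fun _ => 1 / (Fintype.card Y : ℝ) with hp0def
  have hp0 : p0 ∈ stdSimplex ℝ Y := by
    constructor
    · intro y; rw [hp0def]; positivity
    · rw [hp0def]
      rw [Finset.sum_const, Finset.card_univ, nsmul_eq_mul]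
      field_simp
  -- the coefficients are nonnegative
  have hlam0 : ∀ z, 0 ≤ lam z := by
    intro z
    by_contra hneg
    push_neg at hneg
    have hml : 0 < -lam z := by linarith
    set A : ℝ := (u - f (fun _ => c - 1)) / (-lam z) with hAdef
    set R : ℝ := max 0 A + 1 with hRdef
    have hR0 : 0 < R := by
      have := le_max_left 0 A
      rw [hRdef]; linarith
    have hRA : A ≤ R := by
      have := le_max_right 0 A
      rw [hRdef]; linarith
    set xR : Y → ℝ := (fun _ => c - 1) + (-R) • (fun j => if z = j then (1 : ℝ) else 0)
      with hxRdef
    have hxRB : xR ∈ B := by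
      refine hBmem xR fun j => ?_
      rw [hxRdef]
      simp only [Pi.add_apply, Pi.smul_apply, smul_eq_mul]
      by_cases h : z = j
      · rw [if_pos h]; linarith
      · rw [if_neg h]; linarith
    have hfxR : f xR = f (fun _ => c - 1) + R * (-lam z) := by
      rw [hxRdef, map_add, f.map_smul, smul_eq_mul]
      have hl : f (fun j => if z = j then (1 : ℝ) else 0) = lam z := rfl
      rw [hl]; ring
    have hge : u ≤ f xR := by
      have h1 : u - f (fun _ => c - 1) ≤ R * (-lam z) := by
        calc u - f (fun _ => c - 1) = A * (-lam z) := by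
              rw [hAdef, div_mul_cancel₀ _ hml.ne']
          _ ≤ R * (-lam z) := mul_le_mul_of_nonneg_right hRA hml.le
      rw [hfxR]; linarith
    exact absurd (hfB xR hxRB) (not_lt.2 hge)
  have hS0 : 0 ≤ ∑ z, lam z := Finset.sum_nonneg fun z _ => hlam0 z
  have hSne : (∑ z, lam z) ≠ 0 := by
    intro hSz
    have hall := (Finset.sum_eq_zero_iff_of_nonneg fun z _ => hlam0 z).1 hSz
    have hf0 : ∀ x : Y → ℝ, f x = 0 := by
      intro x
      rw [hf x]
      exact Finset.sum_eq_zero fun z _ => by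
        rw [hall z (Finset.mem_univ z), mul_zero]
    have h1 : (0 : ℝ) < u := by
      have := hfB (fun _ => c - 1) (hBmem _ fun z => by linarith)
      rwa [hf0] at this
    have h2 : u ≤ 0 := by
      have := hfC (fun z => mixLoss n k w D p0 z) ⟨p0, hp0, fun z => le_rfl⟩
      rwa [hf0] at this
    linarith
  have hS : 0 < ∑ z, lam z := lt_of_le_of_ne hS0 (Ne.symm hSne)
  -- the normalized separating functional is a distribution
  set q : Y → ℝ := fun z => lam z / (∑ z', lam z') with hqdef
  have hqS : q ∈ stdSimplex ℝ Y := by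
    constructor
    · intro z; exact div_nonneg (hlam0 z) hS0
    · rw [hqdef, ← Finset.sum_div, div_self hSne]
  -- the averaging identity
  have hid : ∑ z, q z * mixLoss n k w D q z = 1 / ((k : ℝ) + 1) := by
    unfold mixLoss
    calc ∑ z, q z * ∑ i, D i * plLoss k (w i) q z
        = ∑ i, D i * ∑ z, q z * plLoss k (w i) q z := by
          simp_rw [Finset.mul_sum]
          rw [Finset.sum_comm]
          refine Finset.sum_congr rfl fun i _ => Finset.sum_congr rfl fun z _ => by ring
      _ = ∑ i, D i * (1 / ((k : ℝ) + 1)) :=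
          Finset.sum_congr rfl fun i _ => by rw [plLoss_identity k (hw i) hqS.2]
      _ = 1 / ((k : ℝ) + 1) := by rw [← Finset.sum_mul, hD1, one_mul]
  have hqz : ∀ z, q z * (∑ z', lam z') = lam z := by
    intro z; rw [hqdef]; field_simp
  have hflq : f (fun z => mixLoss n k w D q z) = (∑ z', lam z') * (1 / ((k : ℝ) + 1)) := by
    rw [hf, ← hid, Finset.mul_sum]
    refine Finset.sum_congr rfl fun z _ => ?_
    calc mixLoss n k w D q z * lam z
        = (q z * (∑ z', lam z')) * mixLoss n k w D q z := by rw [hqz z]; ring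
      _ = (∑ z', lam z') * (q z * mixLoss n k w D q z) := by ring
  have hCq : u ≤ (∑ z', lam z') * (1 / ((k : ℝ) + 1)) := by
    rw [← hflq]
    exact hfC _ ⟨q, hqS, fun z => le_rfl⟩
  set c' : ℝ := (c + 1 / ((k : ℝ) + 1)) / 2 with hc'def
  have hc'lt : c' < c := by rw [hc'def]; linarith
  have hc'gt : 1 / ((k : ℝ) + 1) < c' := by rw [hc'def]; linarith
  have hBc' : f (fun _ => c') < u := hfB _ (hBmem _ fun z => hc'lt)
  have hfc' : f (fun _ => c') = c' * ∑ z', lam z' := by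
    rw [hf, ← Finset.mul_sum]
  have hfinal : c' * (∑ z', lam z') < (∑ z', lam z') * (1 / ((k : ℝ) + 1)) := by
    rw [← hfc']; exact lt_of_lt_of_le hBc' hCq
  have : c' < 1 / ((k : ℝ) + 1) := by
    have h := hfinal
    rw [mul_comm c' _] at h
    exact lt_of_mul_lt_mul_left h hS0
  linarith

/-- Existence of a distribution whose mixture loss is everywhere at most `1/(k+1)`. -/
lemma exists_good (n k : ℕ) (w : Fin n → Y → ℝ) (hw : ∀ i y, 0 < w i y)
    (D : Fin n → ℝ) (hD0 : ∀ i, 0 ≤ D i) (hD1 : ∑ i, D i = 1) :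
    ∃ p ∈ stdSimplex ℝ Y, ∀ z, mixLoss n k w D p z ≤ 1 / ((k : ℝ) + 1) := by
  set K : ℕ → Set (Y → ℝ) := fun m =>
    stdSimplex ℝ Y ∩ ⋂ z, {p | mixLoss n k w D p z ≤ 1 / ((k : ℝ) + 1) + 1 / ((m : ℝ) + 1)}
    with hK
  have hclosedIcc : ∀ m : ℕ, IsClosed (⋂ z, {p : Y → ℝ |
      mixLoss n k w D p z ≤ 1 / ((k : ℝ) + 1) + 1 / ((m : ℝ) + 1)}) := fun m =>
    isClosed_iInter fun z => isClosed_le (mixLoss_continuous n k w D z) continuous_const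
  have hclosed : ∀ m, IsClosed (K m) := fun m =>
    (isClosed_stdSimplex ℝ Y).inter (hclosedIcc m)
  have hcpt : ∀ m, IsCompact (K m) := fun m =>
    (isCompact_stdSimplex ℝ Y).inter_right (hclosedIcc m)
  have hmono : ∀ {m m' : ℕ}, m ≤ m' → K m' ⊆ K m := by
    intro m m' hmm x hx
    refine ⟨hx.1, Set.mem_iInter.2 fun z => ?_⟩
    have h1 : mixLoss n k w D x z ≤ 1 / ((k : ℝ) + 1) + 1 / ((m' : ℝ) + 1) :=
      Set.mem_iInter.1 hx.2 z
    have h2 : 1 / ((m' : ℝ) + 1) ≤ 1 / ((m : ℝ) + 1) := by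
      apply one_div_le_one_div_of_le
      · positivity
      · have : (m : ℝ) ≤ (m' : ℝ) := Nat.cast_le.2 hmm
        linarith
    exact le_trans h1 (by linarith)
  have hne : ∀ m : ℕ, (K m).Nonempty := by
    intro m
    have hcm : 1 / ((k : ℝ) + 1) < 1 / ((k : ℝ) + 1) + 1 / ((m : ℝ) + 1) := by
      have : (0 : ℝ) < 1 / ((m : ℝ) + 1) := by positivity
      linarith
    obtain ⟨p, hp, hL⟩ := exists_small_loss n k w hw D hD0 hD1 hcm
    exact ⟨p, hp, Set.mem_iInter.2 fun z => (hL z).le⟩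
  have hdir : Directed (· ⊇ ·) K := fun m m' =>
    ⟨max m m', hmono (le_max_left _ _), hmono (le_max_right _ _)⟩
  obtain ⟨p, hp⟩ :=
    IsCompact.nonempty_iInter_of_directed_nonempty_isCompact_isClosed K hdir hne hcpt hclosed
  rw [Set.mem_iInter] at hp
  refine ⟨p, (hp 0).1, fun z => ?_⟩
  by_contra hgt
  push_neg at hgt
  obtain ⟨m, hm⟩ := exists_nat_one_div_lt (sub_pos.2 hgt)
  have hmem := Set.mem_iInter.1 (hp m).2 z
  have : mixLoss n k w D p z ≤ 1 / ((k : ℝ) + 1) + 1 / ((m : ℝ) + 1) := hmem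
  linarith

end Main

/-- Theorem 4.3, main theorem, for mixtures of Plackett–Luce
preferences: `Y` finite nonempty, `w_1, …, w_n : Y → ℝ` positive weight functions,
`D` a probability distribution over `{1,…,n}`.  For every `k ≥ 1` there exists a
probability distribution `p` on `Y` such that for every response `y ∈ Y`, drawing
`i ~ D` and `S = (v 1, …, v k)` i.i.d. from `p`,
`E[ w_i(S) / (w_i(S) + w_i(y)) ] ≥ k/(k+1)`, where `w_i(S) = Σ_j w_i(v j)`. -/
theorem stmt_13 (Y : Type) [Fintype Y] [DecidableEq Y] [Nonempty Y]
    (n : ℕ) (hn : 1 ≤ n)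
    (w : Fin n → Y → ℝ) (hw : ∀ i y, 0 < w i y)
    (D : Fin n → ℝ) (hD0 : ∀ i, 0 ≤ D i) (hD1 : ∑ i, D i = 1)
    (k : ℕ) (hk : 1 ≤ k) :
    ∃ p : Y → ℝ, (∀ y, 0 ≤ p y) ∧ (∑ y, p y = 1) ∧
      ∀ y : Y,
        ∑ i : Fin n, ∑ v : Fin k → Y,
            D i * (∏ j, p (v j)) *
              ((∑ j, w i (v j)) / ((∑ j, w i (v j)) + w i y))
          ≥ (k : ℝ) / ((k : ℝ) + 1) := by
  obtain ⟨p, hpS, hL⟩ := exists_good n k w hw D hD0 hD1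
  obtain ⟨hp0, hp1⟩ := hpS
  refine ⟨p, hp0, hp1, fun z => ?_⟩
  have hsum1 : ∑ v : Fin k → Y, (∏ j, p (v j)) = 1 := by
    rw [← Fintype.sum_pow p k, hp1, one_pow]
  have key : ∀ i, ∑ v : Fin k → Y,
      D i * (∏ j, p (v j)) * ((∑ j, w i (v j)) / ((∑ j, w i (v j)) + w i z))
      = D i * (1 - plLoss k (w i) p z) := by
    intro i
    have hterm : ∀ v : Fin k → Y,
        D i * (∏ j, p (v j)) * ((∑ j, w i (v j)) / ((∑ j, w i (v j)) + w i z))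
        = D i * ((∏ j, p (v j))
            - (∏ j, p (v j)) * (w i z / ((∑ j, w i (v j)) + w i z))) := by
      intro v
      have hS := weight_pos k (hw i) z v
      have hSne : ((∑ j, w i (v j)) + w i z) ≠ 0 := hS.ne'
      field_simp
      ring
    rw [Finset.sum_congr rfl fun v _ => hterm v, ← Finset.mul_sum,
      Finset.sum_sub_distrib, hsum1]
    unfold plLoss
    rfl
  rw [ge_iff_le]
  have hk1 : ((k : ℝ) + 1) ≠ 0 := by positivity
  calc (k : ℝ) / ((k : ℝ) + 1) = 1 - 1 / ((k : ℝ) + 1) := by field_simp; ring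
    _ ≤ 1 - mixLoss n k w D p z := by linarith [hL z]
    _ = ∑ i, D i * (1 - plLoss k (w i) p z) := by
        unfold mixLoss
        simp only [mul_one_sub]
        rw [Finset.sum_sub_distrib, hD1]
    _ = ∑ i : Fin n, ∑ v : Fin k → Y,
          D i * (∏ j, p (v j)) *
            ((∑ j, w i (v j)) / ((∑ j, w i (v j)) + w i z)) :=
        Finset.sum_congr rfl fun i _ => (key i).symm
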